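/- On a probability space, let x be a square-integrable random vector in ℝ^K with zero mean and covariance E[x xᵀ] = V_x; let w_1,…,w_l be square-integrable random vectors in ℝ^K with zero mean and common covariance E[w_m w_mᵀ] = V_w; let z_0,…,z_l be real square-integrable random variables with zero mean and variance σ_z²; and assume x, w_1,…,w_l, z_0,…,z_l are all mutually independent. For b ∈ ℝ^K and A ∈ ℝ^{K×K}, define c_i = z_i + Σ_{m=1}^{i} bᵀA^{i−m} w_m, y_i = bᵀA^i x + c_i for i = 0,…,l, and x' = A^l x + Σ_{i=1}^{l} A^{l−i} w_i. Let M ∈ ℝ^{(l+1)×K} be the matrix whose i-th row (i = 0,…,l) is bᵀA^i; let V_c be the (l+1)×(l+1) matrix with entries [V_c]_{i,j} = σ_z²·δ_{ij} + bᵀ(Σ_{u=1}^{min(i,j)} A^{i−u} V_w (A^{j−u})ᵀ) b; and for m = 1,…,l let C_m ∈ ℝ^{(l+1)×K} be the matrix whose i-th row equals bᵀA^{i−m}V_w if i ≥ m and is zero otherwise. Then for every g ∈ ℝ^{l+1}, E[(Σ_{i=0}^{l} g_i y_i − 𝟙ᵀ x')²] = gᵀ(M V_x Mᵀ + V_c)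 g − 2 gᵀ(M V_x (A^l)ᵀ 𝟙 + Σ_{m=1}^{l} C_m (A^{l−m})ᵀ 𝟙) + 𝟙ᵀ A^l V_x (A^l)ᵀ 𝟙 + Σ_{i=1}^{l} 𝟙ᵀ A^{l−i} V_w (A^{l−i})ᵀ 𝟙. -/

import Mathlib

/-!
The estimation error `∑ g_i y_i − 𝟙ᵀx'` is, pointwise, a linear combination
`αᵀx + ∑_m β_mᵀ w_m + ∑_i g_i z_i` of the independent zero-mean noises, with
`α = Mᵀg − (A^l)ᵀ𝟙` and `β_m = D_mᵀg − (A^{l−m})ᵀ𝟙`, where `D_m` collects the responses of the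
observations to `w_m`. By independence the cross terms vanish, so the mean squared error is
`αᵀV_xα + ∑_m β_mᵀV_wβ_m + σ_z²‖g‖²`; expanding each quadratic form and recognising
`M = D_0`, `C_m = D_m V_w` and `V_c = σ_z² I + ∑_m D_m V_w D_mᵀ` gives the closed form.
-/

open Matrix Finset MeasureTheory ProbabilityTheory

section LinearAlgebra

variable {R : Type*} [CommRing R] {m n K : ℕ}

lemma vecMul_dotProduct_eq_sum (g : Fin m → R) (P : Matrix (Fin m) (Fin K) R) (v : Fin K → R) :
    (g ᵥ* P) ⬝ᵥ v = ∑ i, g i * (P i ⬝ᵥ v) := by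
  rw [← dotProduct_mulVec]
  rfl

lemma mul_mul_transpose_apply (P : Matrix (Fin m) (Fin K) R) (V : Matrix (Fin K) (Fin K) R)
    (Q : Matrix (Fin n) (Fin K) R) (i : Fin m) (j : Fin n) :
    (P * V * Qᵀ) i j = P i ⬝ᵥ V *ᵥ Q j := by
  rw [Matrix.mul_assoc]
  simp [mul_apply, dotProduct, mulVec, Finset.mul_sum]

lemma dotProduct_mul_mul_transpose_mulVec (P : Matrix (Fin m) (Fin K) R)
    (V : Matrix (Fin K) (Fin K) R) (Q : Matrix (Fin n) (Fin K) R) (g : Fin m → R)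
    (h : Fin n → R) :
    g ⬝ᵥ (P * V * Qᵀ) *ᵥ h = (g ᵥ* P) ⬝ᵥ V *ᵥ (h ᵥ* Q) := by
  rw [Matrix.mul_assoc, ← mulVec_mulVec, dotProduct_mulVec, ← mulVec_mulVec, mulVec_transpose]

lemma sub_dotProduct_mulVec_sub {V : Matrix (Fin K) (Fin K) R} (hV : Vᵀ = V)
    (u v : Fin K → R) :
    (u - v) ⬝ᵥ V *ᵥ (u - v) = u ⬝ᵥ V *ᵥ u - 2 * (u ⬝ᵥ V *ᵥ v) + v ⬝ᵥ V *ᵥ v := by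
  have hsymm : v ⬝ᵥ V *ᵥ u = u ⬝ᵥ V *ᵥ v := by
    rw [dotProduct_mulVec, ← mulVec_transpose, hV, dotProduct_comm]
  rw [mulVec_sub, dotProduct_sub, sub_dotProduct, sub_dotProduct, hsymm]
  ring

end LinearAlgebra

section Reindexing

variable {M : Type*} [AddCommMonoid M]

lemma sum_Icc_eq_sum_Icc_ite (f : ℕ → M) {a l : ℕ} (h : a ≤ l) :
    ∑ k ∈ Icc 1 a, f k = ∑ k ∈ Icc 1 l, if k ≤ a then f k else 0 := by
  rw [← sum_filter]
  congr 1
  ext k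
  simp only [mem_Icc, mem_filter]
  omega

lemma sum_fin_eq_sum_Icc (f : ℕ → M) (l : ℕ) :
    ∑ k : Fin l, f (k + 1) = ∑ k ∈ Icc 1 l, f k := by
  rw [Fin.sum_univ_eq_sum_range (fun k => f (k + 1)), range_eq_Ico, sum_Ico_add', zero_add,
    Ico_add_one_right_eq_Icc]

end Reindexing

section ResponseMatrix

variable {R : Type*} [CommRing R] {n K : ℕ} (b : Fin K → R) (A : Matrix (Fin K) (Fin K) R)

/-- Row `i` of `responseMatrix b A m` is the contribution `bᵀA^(i-m)` of a noise vector injected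
at step `m` to the observation `y_i` (zero for `i < m`). -/
def responseMatrix (m : ℕ) : Matrix (Fin n) (Fin K) R :=
  of fun i => if m ≤ (i : ℕ) then b ᵥ* A ^ ((i : ℕ) - m) else 0

lemma responseMatrix_apply (m : ℕ) (i : Fin n) :
    responseMatrix b A m i = if m ≤ (i : ℕ) then b ᵥ* A ^ ((i : ℕ) - m) else 0 :=
  rfl

lemma responseMatrix_zero :
    responseMatrix (n := n) b A 0 = of fun i : Fin n => b ᵥ* A ^ (i : ℕ) := by
  ext i k
  simp [responseMatrix]

lemma responseMatrix_mul (m : ℕ) (V : Matrix (Fin K) (Fin K) R) :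
    responseMatrix b A m * V
      = of fun (i : Fin n) k => if m ≤ (i : ℕ) then (b ᵥ* (A ^ ((i : ℕ) - m) * V)) k else 0 := by
  ext i k
  rw [mul_apply_eq_vecMul, responseMatrix_apply, of_apply]
  split_ifs <;> simp [vecMul_vecMul]

lemma vecMul_responseMatrix_dotProduct (g : Fin n → R) (m : ℕ) (v : Fin K → R) :
    (g ᵥ* responseMatrix b A m) ⬝ᵥ v
      = ∑ i, g i * if m ≤ (i : ℕ) then b ⬝ᵥ A ^ ((i : ℕ) - m) *ᵥ v else 0 := by
  rw [vecMul_dotProduct_eq_sum]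
  refine sum_congr rfl fun i _ => ?_
  rw [responseMatrix_apply]
  split_ifs <;> simp [dotProduct_mulVec]

lemma responseMatrix_mul_mul_transpose_apply (m : ℕ) (V : Matrix (Fin K) (Fin K) R)
    (i j : Fin n) :
    (responseMatrix b A m * V * (responseMatrix b A m)ᵀ) i j
      = if m ≤ min (i : ℕ) j then b ⬝ᵥ (A ^ ((i : ℕ) - m) * V * (A ^ ((j : ℕ) - m))ᵀ) *ᵥ b
        else 0 := by
  rw [mul_mul_transpose_apply, responseMatrix_apply, responseMatrix_apply]
  split_ifs <;> try omega
  · rw [dotProduct_mul_mul_transpose_mulVec]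
  all_goals simp

lemma smul_one_add_sum_responseMatrix_mul_mul_transpose (l : ℕ) (σ : R)
    (V : Matrix (Fin K) (Fin K) R) :
    σ • 1 + ∑ m ∈ Icc 1 l, responseMatrix b A m * V * (responseMatrix b A m)ᵀ
      = of fun i j : Fin (l + 1) => (if i = j then σ else 0)
          + b ⬝ᵥ (∑ u ∈ Icc 1 (min (i : ℕ) (j : ℕ)),
            A ^ ((i : ℕ) - u) * V * (A ^ ((j : ℕ) - u))ᵀ) *ᵥ b := by
  ext i j
  rw [Matrix.add_apply, Matrix.smul_apply, one_apply, Matrix.sum_apply, of_apply, sum_mulVec,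
    dotProduct_sum, sum_Icc_eq_sum_Icc_ite _ (min_le_left _ _ |>.trans (Nat.lt_succ_iff.mp i.isLt))]
  simp only [responseMatrix_mul_mul_transpose_apply, smul_eq_mul, mul_ite, mul_one, mul_zero]

lemma estimation_error_eq {l : ℕ} (g : Fin (l + 1) → R) (x : Fin K → R)
    (w : ℕ → Fin K → R) (z : ℕ → R) :
    ∑ i : Fin (l + 1), g i * (b ⬝ᵥ A ^ (i : ℕ) *ᵥ x
        + (z i + ∑ m ∈ Icc 1 (i : ℕ), b ⬝ᵥ A ^ ((i : ℕ) - m) *ᵥ w m))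
      - 1 ⬝ᵥ (A ^ l *ᵥ x + ∑ m ∈ Icc 1 l, A ^ (l - m) *ᵥ w m)
    = (g ᵥ* responseMatrix b A 0 - 1 ᵥ* A ^ l) ⬝ᵥ x
      + ∑ m ∈ Icc 1 l, (g ᵥ* responseMatrix b A m - 1 ᵥ* A ^ (l - m)) ⬝ᵥ w m
      + ∑ i, g i * z i := by
  have hnoise : ∀ i : Fin (l + 1), ∑ m ∈ Icc 1 (i : ℕ), b ⬝ᵥ A ^ ((i : ℕ) - m) *ᵥ w m
      = ∑ m ∈ Icc 1 l, if m ≤ (i : ℕ) then b ⬝ᵥ A ^ ((i : ℕ) - m) *ᵥ w m else 0 :=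
    fun i => sum_Icc_eq_sum_Icc_ite _ (Nat.lt_succ_iff.mp i.isLt)
  simp only [sub_dotProduct, vecMul_responseMatrix_dotProduct]
  simp only [← dotProduct_mulVec, dotProduct_add, dotProduct_sum, hnoise, mul_add,
    Finset.mul_sum, sum_add_distrib, sum_sub_distrib]
  rw [sum_comm (s := univ)]
  simp only [mul_ite, mul_zero, zero_le, ↓reduceIte, tsub_zero]
  ring

lemma mse_closed_form_eq {l : ℕ} (g : Fin (l + 1) → R) (σ : R)
    (Vx Vw : Matrix (Fin K) (Fin K) R) :
    g ⬝ᵥ (responseMatrix b A 0 * Vx * (responseMatrix b A 0)ᵀ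
        + (σ • 1 + ∑ m ∈ Icc 1 l, responseMatrix b A m * Vw * (responseMatrix b A m)ᵀ)) *ᵥ g
      - 2 * (g ⬝ᵥ ((responseMatrix b A 0 * Vx * (A ^ l)ᵀ) *ᵥ 1
        + ∑ m ∈ Icc 1 l, (responseMatrix b A m * Vw * (A ^ (l - m))ᵀ) *ᵥ 1))
      + 1 ⬝ᵥ (A ^ l * Vx * (A ^ l)ᵀ) *ᵥ 1
      + ∑ m ∈ Icc 1 l, 1 ⬝ᵥ (A ^ (l - m) * Vw * (A ^ (l - m))ᵀ) *ᵥ 1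
    = ((g ᵥ* responseMatrix b A 0) ⬝ᵥ Vx *ᵥ (g ᵥ* responseMatrix b A 0)
        - 2 * ((g ᵥ* responseMatrix b A 0) ⬝ᵥ Vx *ᵥ (1 ᵥ* A ^ l))
        + (1 ᵥ* A ^ l) ⬝ᵥ Vx *ᵥ (1 ᵥ* A ^ l))
      + ∑ m ∈ Icc 1 l, ((g ᵥ* responseMatrix b A m) ⬝ᵥ Vw *ᵥ (g ᵥ* responseMatrix b A m)
        - 2 * ((g ᵥ* responseMatrix b A m) ⬝ᵥ Vw *ᵥ (1 ᵥ* A ^ (l - m)))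
        + (1 ᵥ* A ^ (l - m)) ⬝ᵥ Vw *ᵥ (1 ᵥ* A ^ (l - m)))
      + (∑ i, g i ^ 2) * σ := by
  simp only [add_mulVec, smul_mulVec, one_mulVec, sum_mulVec, dotProduct_add, dotProduct_smul,
    dotProduct_sum, dotProduct_mul_mul_transpose_mulVec, smul_eq_mul, sum_add_distrib,
    sum_sub_distrib, ← Finset.mul_sum]
  rw [show g ⬝ᵥ g = ∑ i, g i ^ 2 by simp only [dotProduct, sq]]
  ring

end ResponseMatrix

section RandomVector

variable {Ω : Type*} {mΩ : MeasurableSpace Ω} {μ : Measure Ω} {K : ℕ} {X : Ω → Fin K → ℝ}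

lemma memLp_dotProduct {p : ENNReal} (hX : ∀ k, MemLp (fun ω => X ω k) p μ) (u : Fin K → ℝ) :
    MemLp (fun ω => u ⬝ᵥ X ω) p μ :=
  memLp_finsetSum _ fun k _ => (hX k).const_mul (u k)

lemma integral_dotProduct_eq_zero (hX : ∀ k, Integrable (fun ω => X ω k) μ)
    (hmean : ∀ k, ∫ ω, X ω k ∂μ = 0) (u : Fin K → ℝ) :
    ∫ ω, u ⬝ᵥ X ω ∂μ = 0 := by
  simp only [dotProduct]
  rw [integral_finsetSum _ fun k _ => (hX k).const_mul _]
  simp [integral_const_mul, hmean]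

lemma integral_dotProduct_mul_dotProduct {V : Matrix (Fin K) (Fin K) ℝ}
    (hX : ∀ k, MemLp (fun ω => X ω k) 2 μ) (hcov : ∀ i j, ∫ ω, X ω i * X ω j ∂μ = V i j)
    (u v : Fin K → ℝ) :
    ∫ ω, (u ⬝ᵥ X ω) * (v ⬝ᵥ X ω) ∂μ = u ⬝ᵥ V *ᵥ v := by
  have hint : ∀ i j, Integrable (fun ω => u i * v j * (X ω i * X ω j)) μ := fun i j =>
    ((hX i).integrable_mul (hX j)).const_mul _
  have hexpand : ∀ ω, (u ⬝ᵥ X ω) * (v ⬝ᵥ X ω) = ∑ i, ∑ j, u i * v j * (X ω i * X ω j) := by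
    intro ω
    simp only [dotProduct, Finset.sum_mul_sum]
    exact sum_congr rfl fun i _ => sum_congr rfl fun j _ => by ring
  simp_rw [hexpand]
  rw [integral_finsetSum _ fun i _ => integrable_finsetSum _ fun j _ => hint i j]
  simp_rw [integral_finsetSum _ fun j _ => hint _ j, integral_const_mul, hcov, dotProduct,
    mulVec, dotProduct, Finset.mul_sum]
  exact sum_congr rfl fun i _ => sum_congr rfl fun j _ => by ring

lemma transpose_eq_of_integral_mul {V : Matrix (Fin K) (Fin K) ℝ}
    (hcov : ∀ i j, ∫ ω, X ω i * X ω j ∂μ = V i j) : Vᵀ = V := by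
  ext i j
  simp_rw [transpose_apply, ← hcov, mul_comm]

lemma integral_sub_dotProduct_sq {V : Matrix (Fin K) (Fin K) ℝ}
    (hX : ∀ k, MemLp (fun ω => X ω k) 2 μ) (hcov : ∀ i j, ∫ ω, X ω i * X ω j ∂μ = V i j)
    (u v : Fin K → ℝ) :
    ∫ ω, ((u - v) ⬝ᵥ X ω) ^ 2 ∂μ = u ⬝ᵥ V *ᵥ u - 2 * (u ⬝ᵥ V *ᵥ v) + v ⬝ᵥ V *ᵥ v := by
  simp_rw [sq, integral_dotProduct_mul_dotProduct hX hcov,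
    sub_dotProduct_mulVec_sub (transpose_eq_of_integral_mul hcov)]

end RandomVector

section IndependentNoise

variable {Ω : Type*} {mΩ : MeasurableSpace Ω} {μ : Measure Ω}

lemma integral_sq_sum_of_iIndepFun [IsFiniteMeasure μ] {ι : Type*} [Fintype ι] {F : ι → Ω → ℝ}
    (hind : iIndepFun F μ) (hL2 : ∀ s, MemLp (F s) 2 μ) (hmean : ∀ s, ∫ ω, F s ω ∂μ = 0) :
    ∫ ω, (∑ s, F s ω) ^ 2 ∂μ = ∑ s, ∫ ω, F s ω ^ 2 ∂μ := by
  have hvar := IndepFun.variance_sum (s := univ) (fun s _ => hL2 s)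
    fun s _ t _ hst => hind.indepFun hst
  have hsum_mean : ∫ ω, (∑ s, F s) ω ∂μ = 0 := by
    simp_rw [Finset.sum_apply]
    rw [integral_finsetSum _ fun s _ => (hL2 s).integrable one_le_two]
    exact sum_eq_zero fun s _ => hmean s
  rw [variance_of_integral_eq_zero (memLp_finsetSum' _ fun s _ => hL2 s).aemeasurable
    hsum_mean] at hvar
  simpa [Finset.sum_apply, variance_of_integral_eq_zero (hL2 _).aemeasurable (hmean _)] using hvar

def NoiseSpace (K l n : ℕ) : Unit ⊕ (Fin l ⊕ Fin n) → Type :=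
  Sum.elim (fun _ => Fin K → ℝ) (Sum.elim (fun _ => Fin K → ℝ) (fun _ => ℝ))

instance (K l n : ℕ) : ∀ s, MeasurableSpace (NoiseSpace K l n s) :=
  fun s => Sum.rec (fun _ => (inferInstance : MeasurableSpace (Fin K → ℝ)))
    (fun s => Sum.rec (fun _ => (inferInstance : MeasurableSpace (Fin K → ℝ)))
      (fun _ => (inferInstance : MeasurableSpace ℝ)) s) s

def noiseFamily {K l n : ℕ} (X : Ω → Fin K → ℝ) (W : Fin l → Ω → Fin K → ℝ)
    (Z : Fin n → Ω → ℝ) : ∀ s, Ω → NoiseSpace K l n s :=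
  fun s => Sum.rec (fun _ => X) (fun s => Sum.rec W Z s) s

lemma integral_sq_dotProduct_add_sum_add_sum [IsFiniteMeasure μ] {K l n : ℕ}
    {X : Ω → Fin K → ℝ} {W : Fin l → Ω → Fin K → ℝ} {Z : Fin n → Ω → ℝ}
    (hind : iIndepFun (noiseFamily X W Z) μ)
    (hX : ∀ k, MemLp (fun ω => X ω k) 2 μ) (hXmean : ∀ k, ∫ ω, X ω k ∂μ = 0)
    (hW : ∀ m k, MemLp (fun ω => W m ω k) 2 μ) (hWmean : ∀ m k, ∫ ω, W m ω k ∂μ = 0)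
    (hZ : ∀ i, MemLp (Z i) 2 μ) (hZmean : ∀ i, ∫ ω, Z i ω ∂μ = 0)
    (u : Fin K → ℝ) (v : Fin l → Fin K → ℝ) (c : Fin n → ℝ) :
    ∫ ω, (u ⬝ᵥ X ω + (∑ m, v m ⬝ᵥ W m ω + ∑ i, c i * Z i ω)) ^ 2 ∂μ
      = ∫ ω, (u ⬝ᵥ X ω) ^ 2 ∂μ
        + (∑ m, ∫ ω, (v m ⬝ᵥ W m ω) ^ 2 ∂μ + ∑ i, c i ^ 2 * ∫ ω, Z i ω ^ 2 ∂μ) := by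
  let φ : ∀ s, NoiseSpace K l n s → ℝ
    | .inl _ => fun y : Fin K → ℝ => u ⬝ᵥ y
    | .inr (.inl m) => fun y : Fin K → ℝ => v m ⬝ᵥ y
    | .inr (.inr i) => fun t : ℝ => c i * t
  have hφ : ∀ s, Measurable (φ s) := by
    rintro (_ | _ | _)
    · exact (continuous_const.dotProduct continuous_id).measurable
    · exact (continuous_const.dotProduct continuous_id).measurable
    · exact measurable_const_mul (M := ℝ) _
  have key := integral_sq_sum_of_iIndepFun (hind.comp φ hφ) ?L2 ?mean
  case L2 =>
    rintro (_ | m | i)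
    · exact memLp_dotProduct hX _
    · exact memLp_dotProduct (hW m) _
    · exact (hZ i).const_mul _
  case mean =>
    rintro (_ | m | i)
    · exact integral_dotProduct_eq_zero (fun k => (hX k).integrable one_le_two) hXmean _
    · exact integral_dotProduct_eq_zero (fun k => (hW m k).integrable one_le_two) (hWmean m) _
    · exact (integral_const_mul (c i) (Z i)).trans (by rw [hZmean, mul_zero])
  simpa [φ, noiseFamily, Fintype.sum_sum_type, mul_pow, integral_const_mul] using key

end IndependentNoise

theorem stmt9_general {Ω : Type*} {mΩ : MeasurableSpace Ω} (μ : Measure Ω) [IsProbabilityMeasure μ]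
    (K l : ℕ)
    (A Vx Vw : Matrix (Fin K) (Fin K) ℝ) (b : Fin K → ℝ) (σz2 : ℝ)
    (x : Ω → Fin K → ℝ) (w : ℕ → Ω → Fin K → ℝ) (z : ℕ → Ω → ℝ)
    (hindep : iIndepFun
      (m := fun s : Unit ⊕ (Fin l ⊕ Fin (l + 1)) =>
        Sum.rec (motive := fun s => MeasurableSpace (Sum.elim (fun _ : Unit => Fin K → ℝ)
            (Sum.elim (fun _ : Fin l => Fin K → ℝ) (fun _ : Fin (l + 1) => ℝ)) s))
          (fun _ => (inferInstance : MeasurableSpace (Fin K → ℝ)))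
          (fun s => Sum.rec (motive := fun s => MeasurableSpace
              (Sum.elim (fun _ : Fin l => Fin K → ℝ) (fun _ : Fin (l + 1) => ℝ) s))
            (fun _ => (inferInstance : MeasurableSpace (Fin K → ℝ)))
            (fun _ => (inferInstance : MeasurableSpace ℝ)) s) s)
      (fun s : Unit ⊕ (Fin l ⊕ Fin (l + 1)) =>
        Sum.rec (motive := fun s => Ω → Sum.elim (fun _ : Unit => Fin K → ℝ)
            (Sum.elim (fun _ : Fin l => Fin K → ℝ) (fun _ : Fin (l + 1) => ℝ)) s)
          (fun _ => x)
          (fun s => Sum.rec (motive := fun s => Ω →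
              Sum.elim (fun _ : Fin l => Fin K → ℝ) (fun _ : Fin (l + 1) => ℝ) s)
            (fun m => w ((m : ℕ) + 1)) (fun i => z (i : ℕ)) s) s) μ)
    (hL2x : ∀ k, MemLp (fun ω => x ω k) 2 μ)
    (hmeanx : ∀ k, ∫ ω, x ω k ∂μ = 0)
    (hcovx : ∀ i j, ∫ ω, x ω i * x ω j ∂μ = Vx i j)
    (hL2w : ∀ m, 1 ≤ m → m ≤ l → ∀ k, MemLp (fun ω => w m ω k) 2 μ)
    (hmeanw : ∀ m, 1 ≤ m → m ≤ l → ∀ k, ∫ ω, w m ω k ∂μ = 0)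
    (hcovw : ∀ m, 1 ≤ m → m ≤ l → ∀ i j, ∫ ω, w m ω i * w m ω j ∂μ = Vw i j)
    (hL2z : ∀ i, i ≤ l → MemLp (z i) 2 μ)
    (hmeanz : ∀ i, i ≤ l → ∫ ω, z i ω ∂μ = 0)
    (hvarz : ∀ i, i ≤ l → ∫ ω, (z i ω) ^ 2 ∂μ = σz2)
    (c : ℕ → Ω → ℝ)
    (hc : ∀ i ω, c i ω = z i ω + ∑ m ∈ Finset.Icc 1 i, b ⬝ᵥ (A ^ (i - m)).mulVec (w m ω))
    (y : ℕ → Ω → ℝ)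
    (hy : ∀ i ω, y i ω = b ⬝ᵥ (A ^ i).mulVec (x ω) + c i ω)
    (x' : Ω → Fin K → ℝ)
    (hx' : ∀ ω, x' ω = (A ^ l).mulVec (x ω)
      + ∑ i ∈ Finset.Icc 1 l, (A ^ (l - i)).mulVec (w i ω))
    (M : Matrix (Fin (l + 1)) (Fin K) ℝ)
    (hM : M = Matrix.of fun (i : Fin (l + 1)) (k : Fin K) => (b ᵥ* A ^ (i : ℕ)) k)
    (Vc : Matrix (Fin (l + 1)) (Fin (l + 1)) ℝ)
    (hVc : Vc = Matrix.of fun (i j : Fin (l + 1)) =>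
      (if i = j then σz2 else 0)
        + b ⬝ᵥ (∑ u ∈ Finset.Icc 1 (min (i : ℕ) (j : ℕ)),
            A ^ ((i : ℕ) - u) * Vw * (A ^ ((j : ℕ) - u))ᵀ).mulVec b)
    (C : ℕ → Matrix (Fin (l + 1)) (Fin K) ℝ)
    (hC : ∀ m, C m = Matrix.of fun (i : Fin (l + 1)) (k : Fin K) =>
      if m ≤ (i : ℕ) then (b ᵥ* (A ^ ((i : ℕ) - m) * Vw)) k else 0) :
    ∀ g : Fin (l + 1) → ℝ,
      ∫ ω, (∑ i : Fin (l + 1), g i * y (i : ℕ) ω - (1 : Fin K → ℝ) ⬝ᵥ x' ω) ^ 2 ∂μ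
        = g ⬝ᵥ (M * Vx * Mᵀ + Vc).mulVec g
          - 2 * (g ⬝ᵥ ((M * Vx * (A ^ l)ᵀ).mulVec 1
              + ∑ m ∈ Finset.Icc 1 l, (C m * (A ^ (l - m))ᵀ).mulVec 1))
          + (1 : Fin K → ℝ) ⬝ᵥ (A ^ l * Vx * (A ^ l)ᵀ).mulVec 1
          + ∑ i ∈ Finset.Icc 1 l,
              (1 : Fin K → ℝ) ⬝ᵥ (A ^ (l - i) * Vw * (A ^ (l - i))ᵀ).mulVec 1 := by
  intro g
  simp only [hM, hVc, hC, ← responseMatrix_zero, ← responseMatrix_mul,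
    ← smul_one_add_sum_responseMatrix_mul_mul_transpose, mse_closed_form_eq]
  have herr : ∀ ω, ∑ i : Fin (l + 1), g i * y i ω - 1 ⬝ᵥ x' ω
      = (g ᵥ* responseMatrix b A 0 - 1 ᵥ* A ^ l) ⬝ᵥ x ω
        + (∑ m : Fin l,
            (g ᵥ* responseMatrix b A (m + 1) - 1 ᵥ* A ^ (l - (m + 1))) ⬝ᵥ w (m + 1) ω
          + ∑ i : Fin (l + 1), g i * z i ω) := by
    intro ω
    simp only [hy, hc, hx']
    rw [estimation_error_eq b A g (x ω) (w · ω) (z · ω), add_assoc,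
      sum_fin_eq_sum_Icc (fun m => (g ᵥ* responseMatrix b A m - 1 ᵥ* A ^ (l - m)) ⬝ᵥ w m ω)]
  have hw : ∀ m ∈ Icc 1 l,
      ∫ ω, ((g ᵥ* responseMatrix b A m - 1 ᵥ* A ^ (l - m)) ⬝ᵥ w m ω) ^ 2 ∂μ
      = (g ᵥ* responseMatrix b A m) ⬝ᵥ Vw *ᵥ (g ᵥ* responseMatrix b A m)
        - 2 * ((g ᵥ* responseMatrix b A m) ⬝ᵥ Vw *ᵥ (1 ᵥ* A ^ (l - m)))
        + (1 ᵥ* A ^ (l - m)) ⬝ᵥ Vw *ᵥ (1 ᵥ* A ^ (l - m)) := fun m hm =>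
    integral_sub_dotProduct_sq (hL2w m (mem_Icc.mp hm).1 (mem_Icc.mp hm).2)
      (hcovw m (mem_Icc.mp hm).1 (mem_Icc.mp hm).2) _ _
  simp_rw [herr]
  rw [integral_sq_dotProduct_add_sum_add_sum hindep hL2x hmeanx
      (fun m => hL2w _ (by omega) m.isLt) (fun m => hmeanw _ (by omega) m.isLt)
      (fun i => hL2z _ (by omega)) (fun i => hmeanz _ (by omega)),
    integral_sub_dotProduct_sq hL2x hcovx,
    sum_fin_eq_sum_Icc
      (fun m => ∫ ω, ((g ᵥ* responseMatrix b A m - 1 ᵥ* A ^ (l - m)) ⬝ᵥ w m ω) ^ 2 ∂μ),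
    sum_congr rfl hw,
    sum_congr rfl fun (i : Fin (l + 1)) _ => congrArg (g i ^ 2 * ·) (hvarz i (by omega)), sum_mul]
  ring

/-- Closed-form computation MSE (eq. (21)) of the low-complexity AirComp policy: applying a
linear filter `g` to the stacked received signals `y_i = bᵀA^i x + c_i` to estimate the sum
`𝟙ᵀ x'` of the current sensor signals `x' = A^l x + Σ_{i=1}^{l} A^{l−i} w_i` gives
`E[(Σ_i g_i y_i − 𝟙ᵀx')²] = gᵀ(M V_x Mᵀ + V_c)g − 2gᵀ(M V_x (A^l)ᵀ𝟙 + Σ_m C_m (A^{l−m})ᵀ𝟙)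
+ 𝟙ᵀA^l V_x (A^l)ᵀ𝟙 + Σ_i 𝟙ᵀA^{l−i} V_w (A^{l−i})ᵀ𝟙`. -/
theorem stmt9 {Ω : Type*} {mΩ : MeasurableSpace Ω} (μ : Measure Ω) [IsProbabilityMeasure μ]
    (K l : ℕ) (hK : 0 < K) (hl : 0 < l)
    (A Vx Vw : Matrix (Fin K) (Fin K) ℝ) (b : Fin K → ℝ) (σz2 : ℝ)
    (x : Ω → Fin K → ℝ) (w : ℕ → Ω → Fin K → ℝ) (z : ℕ → Ω → ℝ)
    (hindep : iIndepFun
      (m := fun s : Unit ⊕ (Fin l ⊕ Fin (l + 1)) =>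
        Sum.rec (motive := fun s => MeasurableSpace (Sum.elim (fun _ : Unit => Fin K → ℝ)
            (Sum.elim (fun _ : Fin l => Fin K → ℝ) (fun _ : Fin (l + 1) => ℝ)) s))
          (fun _ => (inferInstance : MeasurableSpace (Fin K → ℝ)))
          (fun s => Sum.rec (motive := fun s => MeasurableSpace
              (Sum.elim (fun _ : Fin l => Fin K → ℝ) (fun _ : Fin (l + 1) => ℝ) s))
            (fun _ => (inferInstance : MeasurableSpace (Fin K → ℝ)))
            (fun _ => (inferInstance : MeasurableSpace ℝ)) s) s)
      (fun s : Unit ⊕ (Fin l ⊕ Fin (l + 1)) =>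
        Sum.rec (motive := fun s => Ω → Sum.elim (fun _ : Unit => Fin K → ℝ)
            (Sum.elim (fun _ : Fin l => Fin K → ℝ) (fun _ : Fin (l + 1) => ℝ)) s)
          (fun _ => x)
          (fun s => Sum.rec (motive := fun s => Ω →
              Sum.elim (fun _ : Fin l => Fin K → ℝ) (fun _ : Fin (l + 1) => ℝ) s)
            (fun m => w ((m : ℕ) + 1)) (fun i => z (i : ℕ)) s) s) μ)
    (hL2x : ∀ k, MemLp (fun ω => x ω k) 2 μ)
    (hmeanx : ∀ k, ∫ ω, x ω k ∂μ = 0)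
    (hcovx : ∀ i j, ∫ ω, x ω i * x ω j ∂μ = Vx i j)
    (hL2w : ∀ m, 1 ≤ m → m ≤ l → ∀ k, MemLp (fun ω => w m ω k) 2 μ)
    (hmeanw : ∀ m, 1 ≤ m → m ≤ l → ∀ k, ∫ ω, w m ω k ∂μ = 0)
    (hcovw : ∀ m, 1 ≤ m → m ≤ l → ∀ i j, ∫ ω, w m ω i * w m ω j ∂μ = Vw i j)
    (hL2z : ∀ i, i ≤ l → MemLp (z i) 2 μ)
    (hmeanz : ∀ i, i ≤ l → ∫ ω, z i ω ∂μ = 0)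
    (hvarz : ∀ i, i ≤ l → ∫ ω, (z i ω) ^ 2 ∂μ = σz2)
    (c : ℕ → Ω → ℝ)
    (hc : ∀ i ω, c i ω = z i ω + ∑ m ∈ Finset.Icc 1 i, b ⬝ᵥ (A ^ (i - m)).mulVec (w m ω))
    (y : ℕ → Ω → ℝ)
    (hy : ∀ i ω, y i ω = b ⬝ᵥ (A ^ i).mulVec (x ω) + c i ω)
    (x' : Ω → Fin K → ℝ)
    (hx' : ∀ ω, x' ω = (A ^ l).mulVec (x ω)
      + ∑ i ∈ Finset.Icc 1 l, (A ^ (l - i)).mulVec (w i ω))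
    (M : Matrix (Fin (l + 1)) (Fin K) ℝ)
    (hM : M = Matrix.of fun (i : Fin (l + 1)) (k : Fin K) => (b ᵥ* A ^ (i : ℕ)) k)
    (Vc : Matrix (Fin (l + 1)) (Fin (l + 1)) ℝ)
    (hVc : Vc = Matrix.of fun (i j : Fin (l + 1)) =>
      (if i = j then σz2 else 0)
        + b ⬝ᵥ (∑ u ∈ Finset.Icc 1 (min (i : ℕ) (j : ℕ)),
            A ^ ((i : ℕ) - u) * Vw * (A ^ ((j : ℕ) - u))ᵀ).mulVec b)
    (C : ℕ → Matrix (Fin (l + 1)) (Fin K) ℝ)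
    (hC : ∀ m, C m = Matrix.of fun (i : Fin (l + 1)) (k : Fin K) =>
      if m ≤ (i : ℕ) then (b ᵥ* (A ^ ((i : ℕ) - m) * Vw)) k else 0) :
    ∀ g : Fin (l + 1) → ℝ,
      ∫ ω, (∑ i : Fin (l + 1), g i * y (i : ℕ) ω - (1 : Fin K → ℝ) ⬝ᵥ x' ω) ^ 2 ∂μ
        = g ⬝ᵥ (M * Vx * Mᵀ + Vc).mulVec g
          - 2 * (g ⬝ᵥ ((M * Vx * (A ^ l)ᵀ).mulVec 1
              + ∑ m ∈ Finset.Icc 1 l, (C m * (A ^ (l - m))ᵀ).mulVec 1))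
          + (1 : Fin K → ℝ) ⬝ᵥ (A ^ l * Vx * (A ^ l)ᵀ).mulVec 1
          + ∑ i ∈ Finset.Icc 1 l,
              (1 : Fin K → ℝ) ⬝ᵥ (A ^ (l - i) * Vw * (A ^ (l - i))ᵀ).mulVec 1 :=
  stmt9_general (mΩ := mΩ) μ K l A Vx Vw b σz2 x w z hindep hL2x hmeanx hcovx hL2w hmeanw hcovw hL2z
    hmeanz hvarz c hc y hy x' hx' M hM Vc hVc C hC
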